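/- Consider the dataset in ℝ² with a₁ = (1, −1), y₁ = 1 and a₂ = (−1, −4), y₂ = −1, and the gradient descent iterates θ₀ = 0, θ_{t+1} = θ_t − γ ∇f(θ_t) with step size γ > 0. Then θ₁ = γ·(1/2, 3/4), and f(θ₁) = (1/2)(log(1 + exp(γ/4)) + log(1 + exp(−7γ/2))); in particular f(θ₁) → ∞ as γ → ∞. -/
import Mathlib


noncomputable section

/-- The Euclidean dot product on `ℝ²`. -/
def dot2 (u v : ℝ × ℝ) : ℝ := u.1 * v.1 + u.2 * v.2

/-- First sample `a₁ = (1, −1)`, with label `y₁ = 1`. -/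
def a1 : ℝ × ℝ := (1, -1)
/-- Second sample `a₂ = (−1, −4)`, with label `y₂ = −1`. -/
def a2 : ℝ × ℝ := (-1, -4)
def y1 : ℝ := 1
def y2 : ℝ := -1

/-- The logistic loss for this two-sample dataset. -/
def floss (θ : ℝ × ℝ) : ℝ :=
  (1 / 2) * (Real.log (1 + Real.exp (-(y1 * dot2 a1 θ)))
    + Real.log (1 + Real.exp (-(y2 * dot2 a2 θ))))

/-- The gradient of the logistic loss for this two-sample dataset. -/
def gradf (θ : ℝ × ℝ) : ℝ × ℝ :=
  -((1 / 2 : ℝ) • ((1 + Real.exp (y1 * dot2 a1 θ))⁻¹ • (y1 • a1)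
    + (1 + Real.exp (y2 * dot2 a2 θ))⁻¹ • (y2 • a2)))

/-- The LR+GD iterates `θ₀ = 0`, `θ_{t+1} = θ_t − γ ∇f(θ_t)`. -/
def gdIter (γ : ℝ) : ℕ → ℝ × ℝ
  | 0 => 0
  | t + 1 => gdIter γ t - γ • gradf (gdIter γ t)

lemma gdIter_one (γ : ℝ) : gdIter γ 1 = γ • ((1 / 2 : ℝ), (3 / 4 : ℝ)) := by
  show (gdIter γ 0) - γ • gradf (gdIter γ 0) = _
  simp [gdIter, gradf, dot2, a1, a2, y1, y2, Prod.ext_iff, Real.exp_zero]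
  norm_num

lemma floss_one (γ : ℝ) : floss (gdIter γ 1) = (1 / 2) * (Real.log (1 + Real.exp (γ / 4))
    + Real.log (1 + Real.exp (-(7 * γ / 2)))) := by
  rw [gdIter_one]
  simp [floss, dot2, a1, a2, y1, y2]
  ring_nf

/-- For the dataset `a₁ = (1,−1), y₁ = 1`, `a₂ = (−1,−4), y₂ = −1`:
`θ₁ = γ • (1/2, 3/4)`, `f(θ₁) = (1/2)(log(1 + e^{γ/4}) + log(1 + e^{−7γ/2}))`, and
`f(θ₁) → ∞` as `γ → ∞`. -/
theorem lr_gd_first_iterate_loss_blows_up :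
    (∀ γ : ℝ, 0 < γ →
      gdIter γ 1 = γ • ((1 / 2 : ℝ), (3 / 4 : ℝ)) ∧
      floss (gdIter γ 1) = (1 / 2) * (Real.log (1 + Real.exp (γ / 4))
        + Real.log (1 + Real.exp (-(7 * γ / 2))))) ∧
    Filter.Tendsto (fun γ : ℝ => floss (gdIter γ 1)) Filter.atTop Filter.atTop := by
  refine ⟨fun γ _ => ⟨gdIter_one γ, floss_one γ⟩, ?_⟩
  have h : Filter.Tendsto (fun γ : ℝ => γ / 8) Filter.atTop Filter.atTop :=
    Filter.tendsto_id.atTop_div_const (by norm_num)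
  refine Filter.tendsto_atTop_mono (fun γ => ?_) h
  rw [floss_one]
  have h1 : γ / 4 ≤ Real.log (1 + Real.exp (γ / 4)) := by
    calc γ / 4 = Real.log (Real.exp (γ / 4)) := (Real.log_exp _).symm
    _ ≤ _ := Real.log_le_log (Real.exp_pos _) (by linarith [Real.exp_pos (γ/4)])
  have h2 : (0:ℝ) ≤ Real.log (1 + Real.exp (-(7 * γ / 2))) := by
    apply Real.log_nonneg; linarith [Real.exp_pos (-(7 * γ / 2))]
  linarith

end
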